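/- Let u : ℝ → ℝ be the cusped soliton: a continuous even function with u(0) = 1, 0 < u(x) < 1 for x ≠ 0, u(x) → 0 as |x| → ∞, twice continuously differentiable on ℝ \ {0}, satisfying (1 − u(x)²)·u''(x) = u(x) and u'(x)² = −log(1 − u(x)²) for all x ≠ 0. Then for every infinitely differentiable function v : ℝ → ℝ with compact support contained in ℝ \ {0}, the inequality ∫_ℝ [−(1 − u(x)²)·v''(x) + ((1 + u(x)²)/(1 − u(x)²))·v(x)]·v(x) dx ≥ ∫_ℝ v(x)² dx holds. -/

import Mathlib

open MeasureTheory Filter Set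

/-- Auxiliary: integral of a derivative of a compactly supported function is zero. -/
lemma integral_hasDerivAt_eq_zero (g G : ℝ → ℝ)
    (hg : ∀ x, HasDerivAt g (G x) x) (hsupp : HasCompactSupport g)
    (hG : Integrable G) : ∫ x : ℝ, G x = 0 := by
  obtain ⟨R, hR⟩ := hsupp.isCompact.isBounded.subset_ball 0
  have hR' : ∀ x : ℝ, R ≤ |x| → g x = 0 := by
    intro x hx
    by_contra h
    have hx' : x ∈ tsupport g := subset_tsupport g h
    have := hR hx'
    rw [Metric.mem_ball, Real.dist_eq, sub_zero] at this
    linarith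
  set S := max R 1 with hS
  have hS1 : (1:ℝ) ≤ S := le_max_right _ _
  have hgS : g S = 0 := hR' S (by rw [abs_of_nonneg (by linarith)]; exact le_max_left _ _)
  have hgS' : g (-S) = 0 := hR' (-S) (by rw [abs_neg, abs_of_nonneg (by linarith)]; exact le_max_left _ _)
  have hGsupp : Function.support G ⊆ Set.Ioc (-S) S := by
    intro x hx
    have hx1 : x ∈ tsupport g := by
      by_contra h
      have h0 : ∀ᶠ y in nhds x, g y = 0 :=
        eventually_mem_set.2 ((isOpen_compl_iff.2 (isClosed_tsupport g)).mem_nhds h) |>.mono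
          (fun y hy => image_eq_zero_of_notMem_tsupport hy)
      have : G x = 0 := by
        have h1 : HasDerivAt g 0 x :=
          (hasDerivAt_const x (0:ℝ)).congr_of_eventuallyEq
            (h0.mono fun y hy => by simp [hy])
        exact (hg x).unique h1
      exact hx this
    have := hR hx1
    rw [Metric.mem_ball, Real.dist_eq, sub_zero] at this
    constructor
    · have : -R < x := by cases abs_lt.1 this; linarith
      have : -S ≤ -R := neg_le_neg (le_max_left _ _)
      linarith
    · have hx2 : x < R := (abs_lt.1 ‹|x| < R›).2
      linarith [le_max_left R 1]
  have key : (∫ x in (-S)..S, G x) = ∫ x : ℝ, G x :=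
    intervalIntegral.integral_eq_integral_of_support_subset hGsupp
  have key2 : (∫ x in (-S)..S, G x) = g S - g (-S) :=
    intervalIntegral.integral_eq_sub_of_hasDerivAt (fun x _ => hg x)
      hG.intervalIntegrable
  rw [← key, key2, hgS, hgS', sub_zero]

/-- coercivity of the linearized operator
L = −(1 − u²)∂_x² + (1 + u²)/(1 − u²) at the cusped soliton: for every smooth
compactly supported v with support away from the origin,
∫ (Lv)·v ≥ ∫ v². -/
theorem linearized_operator_coercive
    (u : ℝ → ℝ)
    (hcont : Continuous u)
    (heven : ∀ x : ℝ, u (-x) = u x)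
    (h0 : u 0 = 1)
    (hrange : ∀ x : ℝ, x ≠ 0 → 0 < u x ∧ u x < 1)
    (hdecay : Tendsto u (cocompact ℝ) (nhds 0))
    (hsmooth : ContDiffOn ℝ 2 u {(0 : ℝ)}ᶜ)
    (heq : ∀ x : ℝ, x ≠ 0 → (1 - u x ^ 2) * deriv (deriv u) x = u x)
    (hinv : ∀ x : ℝ, x ≠ 0 → (deriv u x) ^ 2 = -Real.log (1 - u x ^ 2)) :
    ∀ v : ℝ → ℝ, ContDiff ℝ (⊤ : ℕ∞) v → HasCompactSupport v →
      tsupport v ⊆ {(0 : ℝ)}ᶜ →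
      (∫ x : ℝ, (-(1 - u x ^ 2) * deriv (deriv v) x +
          ((1 + u x ^ 2) / (1 - u x ^ 2)) * v x) * v x) ≥
        ∫ x : ℝ, v x ^ 2 := by
  intro v hv hvs hvsupp
  -- zero facts outside the support of v
  have hvz : ∀ x : ℝ, x ∉ tsupport v → v x = 0 := fun x hx =>
    image_eq_zero_of_notMem_tsupport hx
  have hdvz : ∀ x : ℝ, x ∉ tsupport v → deriv v x = 0 := by
    intro x hx
    by_contra h
    exact hx (support_deriv_subset h)
  have htsub : tsupport (deriv v) ⊆ tsupport v :=
    closure_minimal support_deriv_subset (isClosed_tsupport v)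
  have hddvz : ∀ x : ℝ, x ∉ tsupport v → deriv (deriv v) x = 0 := by
    intro x hx
    by_contra h
    exact hx (htsub (support_deriv_subset h))
  -- derivatives of u on the complement of 0
  have hopen : IsOpen ({(0:ℝ)}ᶜ) := isOpen_compl_singleton
  have hu1 : ∀ x : ℝ, x ≠ 0 → HasDerivAt u (deriv u x) x := by
    intro x hx
    exact ((hsmooth.differentiableOn two_ne_zero).differentiableAt
      (hopen.mem_nhds hx)).hasDerivAt
  have hdu : ContDiffOn ℝ 1 (deriv u) ({(0:ℝ)}ᶜ) :=
    hsmooth.deriv_of_isOpen hopen le_rfl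
  have hu2 : ∀ x : ℝ, x ≠ 0 → HasDerivAt (deriv u) (deriv (deriv u) x) x := by
    intro x hx
    exact ((hdu.differentiableOn one_ne_zero).differentiableAt
      (hopen.mem_nhds hx)).hasDerivAt
  have hducont : ContinuousOn (deriv u) ({(0:ℝ)}ᶜ) := hdu.continuousOn
  have hdducont : ContinuousOn (deriv (deriv u)) ({(0:ℝ)}ᶜ) :=
    (ContDiffOn.deriv_of_isOpen (m := 0) hdu hopen (by norm_num)).continuousOn
  -- derivatives of v
  have hv1 : ∀ x : ℝ, HasDerivAt v (deriv v x) x :=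
    fun x => (hv.differentiable (by simp) x).hasDerivAt
  have hdv : ContDiff ℝ (⊤ : ℕ∞) (deriv v) := (contDiff_infty_iff_deriv.1 (hv.of_le (by simp))).2
  have hv2 : ∀ x : ℝ, HasDerivAt (deriv v) (deriv (deriv v) x) x :=
    fun x => (hdv.differentiable (by simp) x).hasDerivAt
  have hvcont : Continuous v := hv.continuous
  have hdvcont : Continuous (deriv v) := hdv.continuous
  have hddvcont : Continuous (deriv (deriv v)) :=
    hdv.continuous_deriv (by exact_mod_cast le_top)
  -- the key functions
  set g : ℝ → ℝ := fun x =>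
    -(1 - u x ^ 2) * deriv v x * v x - u x * deriv u x * (v x) ^ 2 with hg_def
  set G : ℝ → ℝ := fun x =>
    -(1 - u x ^ 2) * deriv (deriv v) x * v x - (1 - u x ^ 2) * (deriv v x) ^ 2
      - ((deriv u x) ^ 2 + u x * deriv (deriv u) x) * (v x) ^ 2 with hG_def
  set h : ℝ → ℝ := fun x =>
    (1 - u x ^ 2) * (deriv v x) ^ 2
      + ((deriv u x) ^ 2 + u x * deriv (deriv u) x + (1 + u x ^ 2) / (1 - u x ^ 2))
        * (v x) ^ 2 with hh_def
  -- pointwise identity: (Lv)·v = G + h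
  have hident : ∀ x : ℝ,
      (-(1 - u x ^ 2) * deriv (deriv v) x +
          ((1 + u x ^ 2) / (1 - u x ^ 2)) * v x) * v x = G x + h x := by
    intro x
    simp only [hG_def, hh_def]
    ring
  -- g has derivative G everywhere
  have hgderiv : ∀ x : ℝ, HasDerivAt g (G x) x := by
    intro x
    by_cases hx : x ∈ tsupport v
    · have hx0 : x ≠ 0 := hvsupp hx
      have hU := hu1 x hx0
      have hU' := hu2 x hx0
      have hV := hv1 x
      have hV' := hv2 x
      have hA : HasDerivAt (fun y => 1 - u y ^ 2)
          (-(2 * u x ^ 1 * deriv u x)) x := by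
        exact ((hasDerivAt_const x (1:ℝ)).sub (hU.pow 2)).congr_deriv (by simp)
      have H := ((hA.neg.mul hV').mul hV).sub ((hU.mul hU').mul (hV.pow 2))
      refine H.congr_deriv ?_
      simp only [hG_def, Pi.mul_apply, Pi.neg_apply, Pi.pow_apply]
      push_cast
      ring
    · -- g vanishes in a neighborhood of x
      have hnbhd : ∀ᶠ y in nhds x, y ∉ tsupport v :=
        eventually_mem_set.2 (((isClosed_tsupport v).isOpen_compl).mem_nhds hx)
      have hgz : g =ᶠ[nhds x] fun _ => (0:ℝ) := by
        filter_upwards [hnbhd] with y hy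
        simp [hg_def, hvz y hy, hdvz y hy]
      have h1 : HasDerivAt g 0 x :=
        (hasDerivAt_const x (0:ℝ)).congr_of_eventuallyEq hgz
      have hGx : G x = 0 := by
        simp [hG_def, hvz x hx, hdvz x hx, hddvz x hx]
      rw [hGx]
      exact h1
  -- supports
  have hsuppg : HasCompactSupport g := by
    apply hvs.mono'
    intro x hx
    by_contra hxt
    apply hx
    simp [hg_def, hvz x hxt, hdvz x hxt]
  -- continuity of G and h
  have hGcont : Continuous G := by
    rw [continuous_iff_continuousAt]
    intro x
    by_cases hx : x ∈ tsupport v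
    · have hx0 : x ≠ 0 := hvsupp hx
      have hxmem : x ∈ ({(0:ℝ)}ᶜ : Set ℝ) := hx0
      have c1 : ContinuousAt (deriv u) x := hducont.continuousAt (hopen.mem_nhds hxmem)
      have c2 : ContinuousAt (deriv (deriv u)) x :=
        hdducont.continuousAt (hopen.mem_nhds hxmem)
      exact (((hcont.continuousAt.pow 2).const_sub 1).neg.mul
          hddvcont.continuousAt |>.mul hvcont.continuousAt |>.sub
          (((hcont.continuousAt.pow 2).const_sub 1).mul
            (hdvcont.continuousAt.pow 2)) |>.sub
          (((c1.pow 2).add (hcont.continuousAt.mul c2)).mul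
            (hvcont.continuousAt.pow 2)))
    · have hnbhd : ∀ᶠ y in nhds x, y ∉ tsupport v :=
        eventually_mem_set.2 (((isClosed_tsupport v).isOpen_compl).mem_nhds hx)
      have hGz : G =ᶠ[nhds x] fun _ => (0:ℝ) := by
        filter_upwards [hnbhd] with y hy
        simp [hG_def, hvz y hy, hdvz y hy, hddvz y hy]
      exact continuousAt_const.congr hGz.symm
  have hhcont : Continuous h := by
    rw [continuous_iff_continuousAt]
    intro x
    by_cases hx : x ∈ tsupport v
    · have hx0 : x ≠ 0 := hvsupp hx
      have hxmem : x ∈ ({(0:ℝ)}ᶜ : Set ℝ) := hx0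
      have c1 : ContinuousAt (deriv u) x := hducont.continuousAt (hopen.mem_nhds hxmem)
      have c2 : ContinuousAt (deriv (deriv u)) x :=
        hdducont.continuousAt (hopen.mem_nhds hxmem)
      have hane : 1 - u x ^ 2 ≠ 0 := by
        obtain ⟨h1, h2⟩ := hrange x hx0
        nlinarith
      exact ((((hcont.continuousAt.pow 2).const_sub 1).mul
          (hdvcont.continuousAt.pow 2)).add
          ((((c1.pow 2).add (hcont.continuousAt.mul c2)).add
            (((hcont.continuousAt.pow 2).const_add 1).div
              ((hcont.continuousAt.pow 2).const_sub 1) hane)).mul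
            (hvcont.continuousAt.pow 2)))
    · have hnbhd : ∀ᶠ y in nhds x, y ∉ tsupport v :=
        eventually_mem_set.2 (((isClosed_tsupport v).isOpen_compl).mem_nhds hx)
      have hhz : h =ᶠ[nhds x] fun _ => (0:ℝ) := by
        filter_upwards [hnbhd] with y hy
        simp [hh_def, hvz y hy, hdvz y hy]
      exact continuousAt_const.congr hhz.symm
  -- compact supports of G and h
  have hsuppG : HasCompactSupport G := by
    apply hvs.mono'
    intro x hx
    by_contra hxt
    apply hx
    simp [hG_def, hvz x hxt, hdvz x hxt, hddvz x hxt]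
  have hsupph : HasCompactSupport h := by
    apply hvs.mono'
    intro x hx
    by_contra hxt
    apply hx
    simp [hh_def, hvz x hxt, hdvz x hxt]
  -- integrability
  have hGint : Integrable G := hGcont.integrable_of_hasCompactSupport hsuppG
  have hhint : Integrable h := hhcont.integrable_of_hasCompactSupport hsupph
  have hv2supp : HasCompactSupport (fun x => v x ^ 2) := by
    apply hvs.mono'
    intro x hx
    by_contra hxt
    apply hx
    simp [hvz x hxt]
  have hv2int : Integrable (fun x => v x ^ 2) :=
    (hvcont.pow 2).integrable_of_hasCompactSupport hv2supp
  -- pointwise lower bound: v² ≤ h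
  have hhle : ∀ x : ℝ, v x ^ 2 ≤ h x := by
    intro x
    by_cases hx : x ∈ tsupport v
    · have hx0 : x ≠ 0 := hvsupp hx
      obtain ⟨h1, h2⟩ := hrange x hx0
      have ha : 0 < 1 - u x ^ 2 := by nlinarith
      have hloga : Real.log (1 - u x ^ 2) ≤ 0 :=
        Real.log_nonpos (by linarith) (by nlinarith)
      have hU'sq : 0 ≤ (deriv u x) ^ 2 := sq_nonneg _
      have hUU'' : u x * deriv (deriv u) x = u x ^ 2 / (1 - u x ^ 2) := by
        have := heq x hx0
        field_simp
        nlinarith [this]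
      have hW : 1 ≤ (deriv u x) ^ 2 + u x * deriv (deriv u) x
          + (1 + u x ^ 2) / (1 - u x ^ 2) := by
        rw [hUU'', hinv x hx0]
        have h3 : (1:ℝ) ≤ u x ^ 2 / (1 - u x ^ 2) + (1 + u x ^ 2) / (1 - u x ^ 2) := by
          rw [← add_div, le_div_iff₀ ha]
          nlinarith
        linarith
      simp only [hh_def]
      nlinarith [sq_nonneg (deriv v x), sq_nonneg (v x)]
    · simp [hh_def, hvz x hx, hdvz x hx]
  -- put everything together
  have hGzero : ∫ x : ℝ, G x = 0 :=
    integral_hasDerivAt_eq_zero g G hgderiv hsuppg hGint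
  calc (∫ x : ℝ, (-(1 - u x ^ 2) * deriv (deriv v) x +
          ((1 + u x ^ 2) / (1 - u x ^ 2)) * v x) * v x)
      = ∫ x : ℝ, (G x + h x) := by
        congr 1
        funext x
        exact hident x
    _ = (∫ x : ℝ, G x) + ∫ x : ℝ, h x := integral_add hGint hhint
    _ = ∫ x : ℝ, h x := by rw [hGzero, zero_add]
    _ ≥ ∫ x : ℝ, v x ^ 2 := integral_mono hv2int hhint hhle
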